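/- arXiv:2205.05579 — 5 statements merged into one kernel-verified Lean document; each statement's English description precedes it below -/
import Mathlib

section
/- For every real ξ ≥ 2, the integral ∫₂^ξ (2·log(s−1)/s) ds equals −π²/6 + (log ξ)² + 2·Li₂(1/ξ). (Here the integrand (2/s)·log(s−1) is the two-fold self-convolution of the function h, so this evaluates the inverse Laplace transform of E(η)²/η on [2,∞).) -/
open Real

/-- The dilogarithm Li₂(y) = ∑_{n=1}^∞ yⁿ/n². -/
noncomputable def Li2 (y : ℝ) : ℝ := ∑' n : ℕ, y ^ (n + 1) / ((n : ℝ) + 1) ^ 2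

/-! Since `Li₂'(y) = -log (1 - y) / y`, the function `F(s) = (log s)² + 2 Li₂(1/s)` is an
antiderivative of `2 log (s - 1) / s` on `(1, ∞)`, so the integral is `F(ξ) - F(2)`. The value
`F(2) = π²/6` is Euler's reflection formula `Li₂(x) + Li₂(1 - x) + log x log (1 - x) = π²/6` at
`x = 1/2`; its left side has derivative zero on `(0, 1)` and tends to `Li₂(0) + Li₂(1) = ζ(2)` at `0`.
-/

open Filter Set Asymptotics Topology

lemma summable_one_div_nat_add_one_sq : Summable fun n : ℕ => 1 / ((n : ℝ) + 1) ^ 2 :=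
  (summable_nat_add_iff 1).mpr (Real.summable_one_div_nat_pow.mpr one_lt_two) |>.congr
    fun n => by push_cast; rfl

lemma Li2_zero : Li2 0 = 0 := by
  simp [Li2]

lemma Li2_one : Li2 1 = π ^ 2 / 6 := by
  simpa [Li2] using ((hasSum_nat_add_iff' 1).mpr hasSum_zeta_two).tsum_eq

lemma continuousOn_Li2 : ContinuousOn Li2 (Icc (-1) 1) := by
  refine continuousOn_tsum (fun n => (continuousOn_pow _).div_const _)
    summable_one_div_nat_add_one_sq fun n y hy => ?_
  have hy : |y| ≤ 1 := abs_le.mpr hy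
  rw [norm_div, norm_pow, Real.norm_eq_abs, Real.norm_of_nonneg (by positivity)]
  gcongr
  exact pow_le_one₀ (abs_nonneg y) hy

lemma hasDerivAt_Li2_tsum {y : ℝ} (hy : |y| < 1) :
    HasDerivAt Li2 (∑' n : ℕ, y ^ n / ((n : ℝ) + 1)) y := by
  obtain ⟨r, hyr, hr1⟩ := exists_between hy
  have hr0 : 0 < r := (abs_nonneg y).trans_lt hyr
  refine hasDerivAt_tsum_of_isPreconnected (u := (r ^ ·)) (t := Ioo (-r) r) (y₀ := 0)
    (g := fun (n : ℕ) (x : ℝ) => x ^ (n + 1) / ((n : ℝ) + 1) ^ 2)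
    (g' := fun (n : ℕ) (x : ℝ) => x ^ n / ((n : ℝ) + 1))
    (summable_geometric_of_lt_one hr0.le hr1) isOpen_Ioo isPreconnected_Ioo
    (fun n x _ => ?_) (fun n x hx => ?_) ⟨by linarith, hr0⟩ (by simp)
    ⟨neg_lt_of_abs_lt hyr, lt_of_abs_lt hyr⟩
  · refine ((hasDerivAt_pow (n + 1) x).div_const _).congr_deriv ?_
    push_cast
    field_simp
  · have hx : |x| ≤ r := abs_le.mpr ⟨hx.1.le, hx.2.le⟩
    rw [norm_div, norm_pow, Real.norm_eq_abs, Real.norm_of_nonneg (by positivity)]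
    calc |x| ^ n / ((n : ℝ) + 1) ≤ |x| ^ n := div_le_self (by positivity) (by simp)
      _ ≤ r ^ n := pow_le_pow_left₀ (abs_nonneg x) hx n

lemma hasDerivAt_Li2 {y : ℝ} (hy0 : y ≠ 0) (hy : |y| < 1) :
    HasDerivAt Li2 (-log (1 - y) / y) y := by
  have hsum : HasSum (fun n : ℕ => y ^ n / ((n : ℝ) + 1)) (-log (1 - y) / y) :=
    ((hasSum_pow_div_log_of_abs_lt_one hy).div_const y).congr_fun fun n => by
      rw [pow_succ]; field_simp
  exact hsum.tsum_eq ▸ hasDerivAt_Li2_tsum hy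

lemma tendsto_log_mul_log_one_sub_nhds_zero :
    Tendsto (fun x => log x * log (1 - x)) (𝓝 0) (𝓝 0) := by
  have hderiv : HasDerivAt (fun x => log (1 - x)) (-1 / (1 - 0)) 0 :=
    ((hasDerivAt_id' (0 : ℝ)).const_sub 1).log (by norm_num)
  have hO : (fun x => log x * log (1 - x)) =O[𝓝 0] fun x => log x * x :=
    (isBigO_refl log _).mul (by simpa using hderiv.hasFDerivAt.isBigO_sub)
  refine hO.trans_tendsto ?_
  simpa [mul_comm] using continuous_mul_log.tendsto 0

lemma continuousAt_log_mul_log_one_sub {x : ℝ} (hx : x ≠ 1) :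
    ContinuousAt (fun x => log x * log (1 - x)) x := by
  rcases eq_or_ne x 0 with rfl | hx0
  · simpa [ContinuousAt] using tendsto_log_mul_log_one_sub_nhds_zero
  · exact (continuousAt_log hx0).mul ((continuous_const.sub continuous_id).continuousAt.log
      (sub_ne_zero.mpr hx.symm))

lemma hasDerivAt_Li2_add_Li2_one_sub_add_log_mul_log {x : ℝ} (hx : x ∈ Ioo 0 1) :
    HasDerivAt (fun x => Li2 x + Li2 (1 - x) + log x * log (1 - x)) 0 x := by
  obtain ⟨hx0, hx1⟩ := hx
  have h1x : 0 < 1 - x := by linarith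
  have hsub : HasDerivAt (fun y : ℝ => 1 - y) (-1) x := by
    simpa using (hasDerivAt_id x).const_sub 1
  have hLi2 := hasDerivAt_Li2 hx0.ne' (by rw [abs_of_pos hx0]; linarith)
  have hLi2_sub := (hasDerivAt_Li2 h1x.ne' (by rw [abs_of_pos h1x]; linarith)).comp x hsub
  have hlog_mul := (hasDerivAt_log hx0.ne').mul ((hasDerivAt_log h1x.ne').comp x hsub)
  refine ((hLi2.add hLi2_sub).add hlog_mul).congr_deriv ?_
  simp only [Function.comp_apply, sub_sub_cancel]
  field_simp
  ring

theorem Li2_add_Li2_one_sub {x : ℝ} (hx : x ∈ Ioo 0 1) :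
    Li2 x + Li2 (1 - x) + log x * log (1 - x) = π ^ 2 / 6 := by
  set G := fun x => Li2 x + Li2 (1 - x) + log x * log (1 - x)
  have hcont : ContinuousOn G (Icc 0 x) := by
    refine ((continuousOn_Li2.mono ?_).add
      (continuousOn_Li2.comp (continuousOn_const.sub continuousOn_id) ?_)).add ?_
    · exact fun t ht => ⟨by linarith [ht.1], ht.2.trans hx.2.le⟩
    · exact fun t ht => show 1 - t ∈ Icc (-1) 1 from
        ⟨by linarith [ht.2, hx.2], by linarith [ht.1]⟩
    · exact fun t ht =>
        (continuousAt_log_mul_log_one_sub (by linarith [ht.2, hx.2])).continuousWithinAt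
  obtain ⟨c, -, hc⟩ := exists_hasDerivAt_eq_slope G (fun _ => 0) hx.1 hcont fun t ht =>
    hasDerivAt_Li2_add_Li2_one_sub_add_log_mul_log ⟨ht.1, ht.2.trans hx.2⟩
  have hGx : G x = G 0 := by
    rw [eq_comm, div_eq_zero_iff, sub_eq_zero] at hc
    exact hc.resolve_right (by linarith [hx.1])
  simpa [G, Li2_zero, Li2_one] using hGx

lemma log_two_sq_add_two_mul_Li2_one_half : log 2 ^ 2 + 2 * Li2 (1 / 2) = π ^ 2 / 6 := by
  have h := Li2_add_Li2_one_sub (x := 1 / 2) ⟨by norm_num, by norm_num⟩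
  rw [show (1 : ℝ) - 1 / 2 = 1 / 2 by norm_num, one_div, log_inv] at h
  rw [one_div]
  linarith

lemma hasDerivAt_log_sq_add_two_mul_Li2_inv {s : ℝ} (hs : 1 < s) :
    HasDerivAt (fun s => log s ^ 2 + 2 * Li2 (1 / s)) (2 * log (s - 1) / s) s := by
  have hs0 : 0 < s := by linarith
  have hinv : HasDerivAt (fun s : ℝ => 1 / s) (-(s ^ 2)⁻¹) s := by
    simpa [one_div] using hasDerivAt_inv hs0.ne'
  have hLi2 := hasDerivAt_Li2 (one_div_pos.mpr hs0).ne'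
    (by rw [abs_of_pos (one_div_pos.mpr hs0)]; exact (div_lt_one hs0).mpr hs)
  refine (((hasDerivAt_log hs0.ne').pow 2).add ((hLi2.comp s hinv).const_mul 2)).congr_deriv ?_
  have hlog : log (1 - 1 / s) = log (s - 1) - log s := by
    rw [← log_div (by linarith) hs0.ne']
    congr 1
    field_simp
  simp only [hlog]
  field_simp
  ring

/-- For every real ξ ≥ 2,
∫₂^ξ (2·log(s−1)/s) ds = −π²/6 + (log ξ)² + 2·Li₂(1/ξ). -/
theorem integral_two_fold_convolution (ξ : ℝ) (hξ : 2 ≤ ξ) :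
    ∫ s in (2 : ℝ)..ξ, 2 * Real.log (s - 1) / s =
      -(π ^ 2) / 6 + (Real.log ξ) ^ 2 + 2 * Li2 (1 / ξ) := by
  have hmem : ∀ s ∈ uIcc 2 ξ, 1 < s := fun s hs => by
    rw [uIcc_of_le hξ] at hs; linarith [hs.1]
  have hcont : ContinuousOn (fun s => 2 * log (s - 1) / s) (uIcc 2 ξ) := fun s hs =>
    have hs := hmem s hs
    (((continuous_sub_right 1).continuousAt.log (by linarith)).const_mul 2).div
      continuousAt_id (show s ≠ 0 by linarith) |>.continuousWithinAt
  rw [intervalIntegral.integral_eq_sub_of_hasDerivAt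
    (fun s hs => hasDerivAt_log_sq_add_two_mul_Li2_inv (hmem s hs))
    hcont.intervalIntegrable]
  linarith [log_two_sq_add_two_mul_Li2_one_half]
end

section
/- Let σ be Watterson's function. For all real x with 1 < x ≤ 2, √x·σ(x) = 1 − (1/2)·log((1 + √(1 − 1/x))/(1 − √(1 − 1/x))). -/
/-!
Differentiating `√x σ(x)` with the delay equation gives `(√x σ(x))' = -σ(x - 1) / (2√x)` for
`x > 1`. On `(1, 2]` the delayed value is `σ(x - 1) = 1/√(x - 1)`, so the derivative is
`-1 / (2√x √(x - 1)) = -(arcosh √x)'`. Hence `√x σ(x) + arcosh √x` is constant on `[1, 2]`, equal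
to its value `1` at `x = 1`, and the logarithm in the claim is `2 arcosh √x`.
-/

open Real Set

lemma log_one_add_div_one_sub_sqrt_one_sub_inv {x : ℝ} (hx : 1 ≤ x) :
    log ((1 + √(1 - 1 / x)) / (1 - √(1 - 1 / x))) = 2 * arcosh √x := by
  have hx0 : 0 < x := by linarith
  have ha : 0 < √x := sqrt_pos.2 hx0
  have ha2 : √x ^ 2 = x := sq_sqrt hx0.le
  have hb2 : √(x - 1) ^ 2 = x - 1 := sq_sqrt (by linarith)
  have hu : √(1 - 1 / x) = √(x - 1) / √x := by
    rw [← sqrt_div' _ hx0.le]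
    congr 1
    field_simp
  -- `(√x + √(x - 1)) * (√x - √(x - 1)) = 1` turns the quotient into a square
  have hratio : (1 + √(1 - 1 / x)) / (1 - √(1 - 1 / x)) = (√x + √(x - 1)) ^ 2 := by
    have hab : √x - √(x - 1) ≠ 0 := by
      intro h
      nlinarith
    rw [hu, one_add_div ha.ne', one_sub_div ha.ne', div_div_div_cancel_right₀ ha.ne',
      div_eq_iff hab]
    nlinarith
  rw [hratio, log_pow, arcosh, ha2]
  push_cast
  ring

lemma hasDerivAt_arcosh_sqrt {x : ℝ} (hx : 1 < x) :
    HasDerivAt (fun t => arcosh √t) (1 / (2 * √x * √(x - 1))) x := by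
  have hx0 : 0 < x := by linarith
  have h1 : 1 < √x := by rw [lt_sqrt zero_le_one]; simpa using hx
  refine ((hasDerivAt_arcosh h1).comp x (hasDerivAt_sqrt hx0.ne')).congr_deriv ?_
  rw [sq_sqrt hx0.le]
  field_simp

lemma continuousOn_arcosh_sqrt : ContinuousOn (fun t => arcosh √t) (Ici 1) :=
  continuousOn_arcosh.comp continuous_sqrt.continuousOn fun t (ht : 1 ≤ t) => by
    simpa using one_le_sqrt.2 ht

lemma hasDerivAt_sqrt_mul_of_hasDerivAt {σ : ℝ → ℝ} {x : ℝ} (hx : 0 < x)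
    (hσ : HasDerivAt σ (-(σ x / 2 + σ (x - 1) / 2) / x) x) :
    HasDerivAt (fun t => √t * σ t) (-σ (x - 1) / (2 * √x)) x := by
  refine ((hasDerivAt_sqrt hx.ne').mul hσ).congr_deriv ?_
  have ha2 : √x ^ 2 = x := sq_sqrt hx.le
  field_simp
  rw [ha2]
  ring

lemma eq_of_hasDerivAt_zero {f : ℝ → ℝ} {a b : ℝ} (hab : a < b) (hf : ContinuousOn f (Icc a b))
    (hf' : ∀ x ∈ Ioo a b, HasDerivAt f 0 x) : f b = f a := by
  obtain ⟨c, -, hc⟩ := exists_hasDerivAt_eq_slope f (fun _ => 0) hab hf hf'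
  rw [eq_comm, div_eq_zero_iff, sub_eq_zero] at hc
  exact hc.resolve_right (sub_ne_zero.2 hab.ne')

theorem watterson_on_one_two_general
    (σ : ℝ → ℝ)
    (hσ_init : ∀ x : ℝ, 0 < x → x ≤ 1 → σ x = 1 / Real.sqrt x)
    (hσ_cont : ContinuousOn σ (Set.Ioi 0))
    (hσ_dde : ∀ x : ℝ, 1 < x → HasDerivAt σ (-(σ x / 2 + σ (x - 1) / 2) / x) x) :
    ∀ x : ℝ, 1 < x → x ≤ 2 →
      Real.sqrt x * σ x =
        1 - (1 / 2) * Real.log ((1 + Real.sqrt (1 - 1 / x)) / (1 - Real.sqrt (1 - 1 / x))) := by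
  intro x hx1 hx2
  set F : ℝ → ℝ := fun t => √t * σ t + arcosh √t
  have hF_cont : ContinuousOn F (Icc 1 x) :=
    (continuous_sqrt.continuousOn.mul (hσ_cont.mono fun t ht => zero_lt_one.trans_le ht.1)).add
      (continuousOn_arcosh_sqrt.mono Icc_subset_Ici_self)
  have hF_deriv : ∀ t ∈ Ioo 1 x, HasDerivAt F 0 t := by
    rintro t ⟨ht1, htx⟩
    have hdelay : σ (t - 1) = 1 / √(t - 1) := hσ_init _ (by linarith) (by linarith)
    refine ((hasDerivAt_sqrt_mul_of_hasDerivAt (by linarith) (hσ_dde t ht1)).add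
      (hasDerivAt_arcosh_sqrt ht1)).congr_deriv ?_
    rw [hdelay]
    field_simp
    ring
  have hF_one : F 1 = 1 := by simp [F, hσ_init 1 one_pos le_rfl, arcosh_zero]
  have hF_x : F x = 1 := (eq_of_hasDerivAt_zero hx1 hF_cont hF_deriv).trans hF_one
  rw [log_one_add_div_one_sub_sqrt_one_sub_inv hx1.le]
  simp only [F] at hF_x
  linarith

/-- Watterson's function satisfies
√x·σ(x) = 1 − (1/2)·log((1 + √(1 − 1/x))/(1 − √(1 − 1/x))) for 1 < x ≤ 2. -/
theorem watterson_on_one_two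
    (σ : ℝ → ℝ)
    (hσ_nonpos : ∀ x ≤ (0 : ℝ), σ x = 0)
    (hσ_init : ∀ x : ℝ, 0 < x → x ≤ 1 → σ x = 1 / Real.sqrt x)
    (hσ_cont : ContinuousOn σ (Set.Ioi 0))
    (hσ_dde : ∀ x : ℝ, 1 < x → HasDerivAt σ (-(σ x / 2 + σ (x - 1) / 2) / x) x) :
    ∀ x : ℝ, 1 < x → x ≤ 2 →
      Real.sqrt x * σ x =
        1 - (1 / 2) * Real.log ((1 + Real.sqrt (1 - 1 / x)) / (1 - Real.sqrt (1 - 1 / x))) :=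
  watterson_on_one_two_general σ hσ_init hσ_cont hσ_dde
end

section
/- Let σ be Watterson's function. For all real x with 0 < x < 1 (so that 1/x > 1), the derivative with respect to x of the function x ↦ x^{−1/2}·σ(1/x) equals (1/(2·x^{3/2}))·σ((1−x)/x). -/
open Real

/-
With y = 1/t, the product rule gives
d/dt [t^{-1/2} σ(1/t)] = -t^{-3/2} (σ(y)/2 + y σ'(y)),
and the delay equation y σ'(y) = -(σ(y) + σ(y-1))/2 for y > 1 turns the bracket into -σ(y-1)/2,
where y - 1 = (1-t)/t.
-/

theorem hasDerivAt_rpow_neg_half_mul_comp_inv {f : ℝ → ℝ} {f' x : ℝ} (hx : 0 < x)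
    (hf : HasDerivAt f f' (1 / x)) :
    HasDerivAt (fun t : ℝ => t ^ (-(1 : ℝ) / 2) * f (1 / t))
      (-(f (1 / x) / 2 + f' / x) / x ^ ((3 : ℝ) / 2)) x := by
  have hpow : HasDerivAt (fun t : ℝ => t ^ (-(1 : ℝ) / 2))
      (-(1 : ℝ) / 2 * x ^ (-(1 : ℝ) / 2 - 1)) x :=
    hasDerivAt_rpow_const (Or.inl hx.ne')
  have hinv : HasDerivAt (fun t : ℝ => 1 / t) (-(x ^ 2)⁻¹) x := by
    simpa only [one_div] using hasDerivAt_inv hx.ne'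
  refine (hpow.mul (hf.comp x hinv)).congr_deriv ?_
  have hsqrt : x ^ (-(1 : ℝ) / 2) = (x ^ ((1 : ℝ) / 2))⁻¹ := by
    rw [← rpow_neg hx.le]; norm_num
  have hpow_sub_one : x ^ (-(1 : ℝ) / 2 - 1) = (x ^ ((3 : ℝ) / 2))⁻¹ := by
    rw [← rpow_neg hx.le]; norm_num
  have hpow_three_halves : x ^ ((3 : ℝ) / 2) = x ^ ((1 : ℝ) / 2) * x := by
    rw [show (3 : ℝ) / 2 = 1 / 2 + 1 by norm_num, rpow_add hx, rpow_one]
  rw [Function.comp_apply, hsqrt, hpow_sub_one, hpow_three_halves]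
  field_simp
  ring

theorem watterson_tilde_derivative_general
    (σ : ℝ → ℝ)
    (hσ_dde : ∀ y : ℝ, 1 < y → HasDerivAt σ (-(σ y / 2 + σ (y - 1) / 2) / y) y)
    (x : ℝ) (hx0 : 0 < x) (hx1 : x < 1) :
    HasDerivAt (fun t : ℝ => t ^ (-(1 : ℝ) / 2) * σ (1 / t))
      (1 / (2 * x ^ ((3 : ℝ) / 2)) * σ ((1 - x) / x)) x := by
  have hy : 1 < 1 / x := by rw [lt_div_iff₀ hx0]; linarith
  refine (hasDerivAt_rpow_neg_half_mul_comp_inv hx0 (hσ_dde (1 / x) hy)).congr_deriv ?_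
  have hshift : (1 - x) / x = 1 / x - 1 := by field_simp
  rw [hshift]
  field_simp
  ring

/-- For Watterson's function σ and 0 < x < 1, the derivative of
x ↦ x^{−1/2}·σ(1/x) equals (1/(2·x^{3/2}))·σ((1−x)/x). -/
theorem watterson_tilde_derivative
    (σ : ℝ → ℝ)
    (hσ_nonpos : ∀ x ≤ (0 : ℝ), σ x = 0)
    (hσ_init : ∀ x : ℝ, 0 < x → x ≤ 1 → σ x = 1 / Real.sqrt x)
    (hσ_cont : ContinuousOn σ (Set.Ioi 0))
    (hσ_dde : ∀ y : ℝ, 1 < y → HasDerivAt σ (-(σ y / 2 + σ (y - 1) / 2) / y) y)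
    (x : ℝ) (hx0 : 0 < x) (hx1 : x < 1) :
    HasDerivAt (fun t : ℝ => t ^ (-(1 : ℝ) / 2) * σ (1 / t))
      (1 / (2 * x ^ ((3 : ℝ) / 2)) * σ ((1 - x) / x)) x :=
  watterson_tilde_derivative_general σ hσ_dde x hx0 hx1
end

section
/- Let ρ be Dickman's function, and assume 0 ≤ ρ(ξ) ≤ 1 for all ξ ≥ 0. Then for every real η > 0, the one-sided Laplace transform ∫₀^∞ e^{−ηξ}·ρ(ξ) dξ equals exp(−E(η))/η, where E(η) = ∫_η^∞ e^{−t}/t dt is the exponential integral. -/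
/-!
Write `L(s) = ∫₀^∞ e^{-sξ} ρ(ξ) dξ` and `J(s) = ∫₁^∞ e^{-sξ} ρ(ξ - 1)/ξ dξ`. Since `ρ = 1` on
`[0, 1]` and `ξ ρ'(ξ) = -ρ(ξ - 1)`, integration by parts on `(1, ∞)` gives `s L(s) = 1 - J(s)`,
while differentiating under the integral sign and shifting `ξ ↦ ξ + 1` gives
`J'(s) = -e^{-s} L(s)`. Hence `G(s) = s L(s) = 1 - J(s)` solves `G' = (e^{-s}/s) G = -E' G`, so
`G e^E` is constant on `(0, ∞)`; as `s → ∞` both `J(s)` and `E(s)` tend to `0`, so the constant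
is `1` and `L(s) = e^{-E(s)}/s`.
-/

open Real MeasureTheory

/-- The exponential integral E(x) = ∫ₓ^∞ e^{−t}/t dt. -/
noncomputable def expInt (x : ℝ) : ℝ := ∫ t in Set.Ioi x, Real.exp (-t) / t

open Set Filter Topology

section

variable {E : Type*} [NormedAddCommGroup E] [NormedSpace ℝ E]

theorem hasDerivAt_setIntegral_Ioi [CompleteSpace E] {f : ℝ → E} {a x : ℝ}
    (hf : IntegrableOn f (Ioi a)) (hax : a < x) (hfx : ContinuousAt f x) :
    HasDerivAt (fun b ↦ ∫ t in Ioi b, f t) (-f x) x := by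
  have hprim : HasDerivAt (fun b ↦ ∫ t in a..b, f t) (f x) x :=
    intervalIntegral.integral_hasDerivAt_right
      ((intervalIntegrable_iff_integrableOn_Ioc_of_le hax.le).2 (hf.mono_set Ioc_subset_Ioi_self))
      (AEStronglyMeasurable.stronglyMeasurableAtFilter_of_mem hf.aestronglyMeasurable
        (Ioi_mem_nhds hax)) hfx
  refine (hprim.const_sub (∫ t in Ioi a, f t)).congr_of_eventuallyEq ?_
  filter_upwards [Ioi_mem_nhds hax] with b hb
  rw [← intervalIntegral.integral_Ioi_sub_Ioi hf hb.le, sub_sub_cancel]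

theorem setIntegral_Ioi_comp_sub_right (f : ℝ → E) (a c : ℝ) :
    ∫ ξ in Ioi (a + c), f (ξ - c) = ∫ ξ in Ioi a, f ξ := by
  rw [← preimage_sub_const_Ioi]
  exact (measurePreserving_sub_right volume c).setIntegral_preimage_emb
    (MeasurableEquiv.subRight c).measurableEmbedding f (Ioi a)

theorem eq_of_hasDerivAt_zero_of_tendsto_atTop {f : ℝ → E} {a : ℝ} {c : E}
    (hf : ∀ x ∈ Ioi a, HasDerivAt f 0 x) (hlim : Tendsto f atTop (𝓝 c)) {x : ℝ} (hx : a < x) :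
    f x = c := by
  have hconst : ∀ y ∈ Ioi a, f y = f x := fun y hy ↦
    isOpen_Ioi.is_const_of_deriv_eq_zero isPreconnected_Ioi
      (fun z hz ↦ (hf z hz).differentiableAt.differentiableWithinAt)
      (fun z hz ↦ (hf z hz).deriv) hy hx
  refine tendsto_nhds_unique (tendsto_const_nhds.congr' ?_) hlim
  filter_upwards [eventually_gt_atTop a] with y hy using (hconst y hy).symm

end

theorem integrableOn_exp_neg_div_Ioi {a : ℝ} (ha : 0 < a) :
    IntegrableOn (fun t ↦ exp (-t) / t) (Ioi a) := by
  refine ((integrableOn_exp_neg_Ioi a).div_const a).mono' ?_ ?_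
  · exact ((continuous_exp.comp continuous_neg).continuousOn.div continuousOn_id
      fun t ht ↦ (ha.trans ht).ne').aestronglyMeasurable measurableSet_Ioi
  · refine (ae_restrict_iff' measurableSet_Ioi).2 (ae_of_all _ fun t ht ↦ ?_)
    rw [norm_div, norm_of_nonneg (exp_pos _).le, norm_of_nonneg (ha.trans ht).le]
    exact div_le_div_of_nonneg_left (exp_pos _).le ha (le_of_lt ht)

theorem hasDerivAt_expInt {x : ℝ} (hx : 0 < x) : HasDerivAt expInt (-(exp (-x) / x)) x :=
  hasDerivAt_setIntegral_Ioi (integrableOn_exp_neg_div_Ioi (half_pos hx)) (half_lt_self hx)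
    ((continuous_exp.comp continuous_neg).continuousAt.div continuousAt_id hx.ne')

theorem tendsto_expInt_atTop : Tendsto expInt atTop (𝓝 0) := by
  refine tendsto_of_tendsto_of_tendsto_of_le_of_le' tendsto_const_nhds
    tendsto_exp_neg_atTop_nhds_zero ?_ ?_
  · filter_upwards [eventually_gt_atTop 0] with x hx
    exact setIntegral_nonneg measurableSet_Ioi fun t ht ↦
      div_nonneg (exp_pos _).le (hx.trans ht).le
  · filter_upwards [eventually_ge_atTop 1] with x hx
    calc expInt x ≤ ∫ t in Ioi x, exp (-t) :=
          setIntegral_mono_on (integrableOn_exp_neg_div_Ioi (one_pos.trans_le hx))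
            (integrableOn_exp_neg_Ioi x) measurableSet_Ioi fun t ht ↦
            div_le_self (exp_pos _).le (hx.trans ht.le)
      _ = exp (-x) := integral_exp_neg_Ioi x

section ExponentialWeight

variable {g : ℝ → ℝ} {a s C : ℝ}

theorem integrableOn_exp_neg_mul_mul (hs : 0 < s)
    (hg : AEStronglyMeasurable g (volume.restrict (Ioi a))) (hgC : ∀ ξ ∈ Ioi a, ‖g ξ‖ ≤ C) :
    IntegrableOn (fun ξ ↦ exp (-s * ξ) * g ξ) (Ioi a) :=
  (exp_neg_integrableOn_Ioi a hs).mul_bdd hg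
    ((ae_restrict_iff' measurableSet_Ioi).2 (ae_of_all _ hgC))

theorem tendsto_integral_exp_neg_mul_mul_atTop (ha : 0 ≤ a) (hgC : ∀ ξ ∈ Ioi a, ‖g ξ‖ ≤ C) :
    Tendsto (fun s ↦ ∫ ξ in Ioi a, exp (-s * ξ) * g ξ) atTop (𝓝 0) := by
  have hC : 0 ≤ C := (norm_nonneg _).trans (hgC (a + 1) (lt_add_one a))
  refine squeeze_zero_norm' ?_ (tendsto_const_nhds.div_atTop tendsto_id (a := C))
  filter_upwards [eventually_gt_atTop 0] with s hs
  calc ‖∫ ξ in Ioi a, exp (-s * ξ) * g ξ‖ ≤ ∫ ξ in Ioi a, C * exp (-s * ξ) := by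
        refine norm_integral_le_of_norm_le ((exp_neg_integrableOn_Ioi a hs).const_mul C)
          ((ae_restrict_iff' measurableSet_Ioi).2 (ae_of_all _ fun ξ hξ ↦ ?_))
        rw [norm_mul, norm_of_nonneg (exp_pos _).le, mul_comm]
        exact mul_le_mul_of_nonneg_right (hgC ξ hξ) (exp_pos _).le
    _ = C * exp (-s * a) / s := by
        rw [integral_const_mul, integral_exp_mul_Ioi (neg_lt_zero.2 hs), neg_div_neg_eq,
          mul_div_assoc]
    _ ≤ C / s := by
        gcongr
        exact mul_le_of_le_one_right hC (exp_le_one_iff.2 (by nlinarith))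

theorem hasDerivAt_integral_exp_neg_mul_mul_div (ha : 0 < a) (hs : 0 < s)
    (hg : AEStronglyMeasurable g (volume.restrict (Ioi a))) (hgC : ∀ ξ ∈ Ioi a, ‖g ξ‖ ≤ C) :
    HasDerivAt (fun s ↦ ∫ ξ in Ioi a, exp (-s * ξ) * (g ξ / ξ))
      (-∫ ξ in Ioi a, exp (-s * ξ) * g ξ) s := by
  have hC : 0 ≤ C := (norm_nonneg _).trans (hgC (a + 1) (lt_add_one a))
  have hg_div : AEStronglyMeasurable (fun ξ ↦ g ξ / ξ) (volume.restrict (Ioi a)) :=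
    hg.div₀ aestronglyMeasurable_id
  have hg_div_le : ∀ ξ ∈ Ioi a, ‖g ξ / ξ‖ ≤ C / a := fun ξ hξ ↦ by
    rw [norm_div, norm_of_nonneg (ha.trans hξ).le]
    exact div_le_div₀ hC (hgC ξ hξ) ha (le_of_lt hξ)
  have hexp_meas (t : ℝ) :
      AEStronglyMeasurable (fun ξ ↦ exp (-t * ξ)) (volume.restrict (Ioi a)) :=
    (by fun_prop : Continuous fun ξ ↦ exp (-t * ξ)).aestronglyMeasurable
  have hbound : ∀ᵐ ξ ∂volume.restrict (Ioi a), ∀ t ∈ Metric.ball s (s / 2),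
      ‖-(exp (-t * ξ) * g ξ)‖ ≤ C * exp (-(s / 2) * ξ) := by
    refine (ae_restrict_iff' measurableSet_Ioi).2 (ae_of_all _ fun ξ hξ t ht ↦ ?_)
    rw [Metric.mem_ball, Real.dist_eq, abs_lt] at ht
    rw [norm_neg, norm_mul, norm_of_nonneg (exp_pos _).le, mul_comm]
    have hξ0 : 0 < ξ := ha.trans hξ
    gcongr
    · exact hgC ξ hξ
    · nlinarith
  have hdiff : ∀ᵐ ξ ∂volume.restrict (Ioi a), ∀ t ∈ Metric.ball s (s / 2),
      HasDerivAt (fun t ↦ exp (-t * ξ) * (g ξ / ξ)) (-(exp (-t * ξ) * g ξ)) t := by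
    refine (ae_restrict_iff' measurableSet_Ioi).2 (ae_of_all _ fun ξ hξ t _ ↦ ?_)
    have hξ0 : ξ ≠ 0 := (ha.trans hξ).ne'
    refine (((hasDerivAt_neg t).mul_const ξ).exp.mul_const (g ξ / ξ)).congr_deriv ?_
    field_simp
  have h := (hasDerivAt_integral_of_dominated_loc_of_deriv_le
    (Metric.ball_mem_nhds s (half_pos hs)) (Eventually.of_forall fun t ↦ (hexp_meas t).mul hg_div)
    (integrableOn_exp_neg_mul_mul hs hg_div hg_div_le) ((hexp_meas s).mul hg).neg hbound
    ((exp_neg_integrableOn_Ioi a (half_pos hs)).const_mul C) hdiff).2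
  rwa [integral_neg] at h

end ExponentialWeight

theorem eq_exp_neg_expInt_of_hasDerivAt {G : ℝ → ℝ}
    (hG : ∀ s ∈ Ioi 0, HasDerivAt G (exp (-s) / s * G s) s) (hlim : Tendsto G atTop (𝓝 1))
    {s : ℝ} (hs : 0 < s) : G s = exp (-expInt s) := by
  have hderiv : ∀ t ∈ Ioi (0 : ℝ), HasDerivAt (fun t ↦ G t * exp (expInt t)) 0 t := fun t ht ↦
    ((hG t ht).mul (hasDerivAt_expInt ht).exp).congr_deriv (by ring)
  have hlim' : Tendsto (fun t ↦ G t * exp (expInt t)) atTop (𝓝 1) := by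
    simpa using hlim.mul ((continuous_exp.tendsto 0).comp tendsto_expInt_atTop)
  rw [exp_neg]
  exact eq_inv_of_mul_eq_one_left (eq_of_hasDerivAt_zero_of_tendsto_atTop hderiv hlim' hs)

section Dickman

variable {ρ : ℝ → ℝ} {C s : ℝ}

theorem ContinuousOn.comp_sub_one_Ioi (hρ_cont : ContinuousOn ρ (Ici 0)) :
    ContinuousOn (fun ξ ↦ ρ (ξ - 1)) (Ioi 1) :=
  hρ_cont.comp (continuousOn_id.sub continuousOn_const) fun _ hξ ↦
    mem_Ici.2 (sub_nonneg.2 (le_of_lt hξ))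

theorem norm_comp_sub_one_div_le (hρ_le : ∀ ξ, 0 ≤ ξ → ‖ρ ξ‖ ≤ C) {ξ : ℝ} (hξ : 1 < ξ) :
    ‖ρ (ξ - 1) / ξ‖ ≤ C := by
  rw [norm_div, norm_of_nonneg (one_pos.trans hξ).le]
  exact (div_le_self (norm_nonneg _) hξ.le).trans (hρ_le _ (sub_nonneg.2 hξ.le))

theorem mul_integral_Ioi_one_exp_neg_mul_dickman (hρ_one : ρ 1 = 1)
    (hρ_cont : ContinuousOn ρ (Ici 0))
    (hρ_dde : ∀ x : ℝ, 1 < x → HasDerivAt ρ (-(ρ (x - 1)) / x) x)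
    (hρ_le : ∀ ξ, 0 ≤ ξ → ‖ρ ξ‖ ≤ C) (hs : 0 < s) :
    s * ∫ ξ in Ioi 1, exp (-s * ξ) * ρ ξ
      = exp (-s) - ∫ ξ in Ioi 1, exp (-s * ξ) * (ρ (ξ - 1) / ξ) := by
  have hexp : Continuous fun ξ ↦ exp (-s * ξ) := by fun_prop
  have hint₁ : IntegrableOn (fun ξ ↦ exp (-s * ξ) * ρ ξ) (Ioi 1) :=
    integrableOn_exp_neg_mul_mul hs
      ((hρ_cont.mono (Ioi_subset_Ici zero_le_one)).aestronglyMeasurable measurableSet_Ioi)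
      fun ξ hξ ↦ hρ_le ξ (zero_le_one.trans (le_of_lt hξ))
  have hint₂ : IntegrableOn (fun ξ ↦ exp (-s * ξ) * (ρ (ξ - 1) / ξ)) (Ioi 1) :=
    integrableOn_exp_neg_mul_mul hs
      ((hρ_cont.comp_sub_one_Ioi.div continuousOn_id fun ξ hξ ↦
        (one_pos.trans hξ).ne').aestronglyMeasurable measurableSet_Ioi)
      fun ξ hξ ↦ norm_comp_sub_one_div_le hρ_le hξ
  have hderiv : ∀ ξ ∈ Ioi (1 : ℝ), HasDerivAt (fun ξ ↦ exp (-s * ξ) * ρ ξ)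
      (-(s * (exp (-s * ξ) * ρ ξ) + exp (-s * ξ) * (ρ (ξ - 1) / ξ))) ξ := fun ξ hξ ↦
    (((hasDerivAt_id' ξ).const_mul (-s)).exp.mul (hρ_dde ξ hξ)).congr_deriv (by ring)
  have hcont : ContinuousWithinAt (fun ξ ↦ exp (-s * ξ) * ρ ξ) (Ici 1) 1 :=
    hexp.continuousWithinAt.mul
      (hρ_cont.mono (Ici_subset_Ici.2 zero_le_one) 1 self_mem_Ici)
  have hlim : Tendsto (fun ξ ↦ exp (-s * ξ) * ρ ξ) atTop (𝓝 0) := by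
    refine squeeze_zero_norm' (a := fun ξ ↦ C * exp (-s * ξ)) ?_ ?_
    · filter_upwards [eventually_ge_atTop 0] with ξ hξ
      rw [norm_mul, norm_of_nonneg (exp_pos _).le, mul_comm]
      exact mul_le_mul_of_nonneg_right (hρ_le ξ hξ) (exp_pos _).le
    · simpa using ((tendsto_exp_atBot.comp
        (tendsto_id.const_mul_atTop_of_neg (neg_lt_zero.2 hs))).const_mul C)
  have hibp := integral_Ioi_of_hasDerivAt_of_tendsto hcont hderiv
    ((hint₁.const_mul s).add hint₂).neg hlim
  rw [integral_neg, integral_add (hint₁.const_mul s) hint₂, integral_const_mul, hρ_one, mul_one,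
    mul_one] at hibp
  linarith

theorem mul_integral_Ioi_zero_exp_neg_mul_dickman
    (hρ_init : ∀ x : ℝ, 0 ≤ x → x ≤ 1 → ρ x = 1) (hρ_cont : ContinuousOn ρ (Ici 0))
    (hρ_dde : ∀ x : ℝ, 1 < x → HasDerivAt ρ (-(ρ (x - 1)) / x) x)
    (hρ_le : ∀ ξ, 0 ≤ ξ → ‖ρ ξ‖ ≤ C) (hs : 0 < s) :
    s * ∫ ξ in Ioi 0, exp (-s * ξ) * ρ ξ
      = 1 - ∫ ξ in Ioi 1, exp (-s * ξ) * (ρ (ξ - 1) / ξ) := by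
  have hint : IntegrableOn (fun ξ ↦ exp (-s * ξ) * ρ ξ) (Ioi 0) :=
    integrableOn_exp_neg_mul_mul hs
      ((hρ_cont.mono Ioi_subset_Ici_self).aestronglyMeasurable measurableSet_Ioi)
      fun ξ hξ ↦ hρ_le ξ (le_of_lt hξ)
  have hhead : s * ∫ ξ in (0 : ℝ)..1, exp (-s * ξ) * ρ ξ = 1 - exp (-s) := by
    rw [intervalIntegral.integral_congr (g := fun ξ ↦ exp (-s * ξ)) fun ξ hξ ↦ ?_]
    · rw [← intervalIntegral.integral_Ioi_sub_Ioi (exp_neg_integrableOn_Ioi 0 hs) zero_le_one,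
        integral_exp_mul_Ioi (neg_lt_zero.2 hs), integral_exp_mul_Ioi (neg_lt_zero.2 hs)]
      field_simp
      simp
    · rw [uIcc_of_le zero_le_one] at hξ
      simp [hρ_init ξ hξ.1 hξ.2]
  rw [← intervalIntegral.integral_interval_add_Ioi hint
      (hint.mono_set (Ioi_subset_Ioi zero_le_one)), mul_add, hhead,
    mul_integral_Ioi_one_exp_neg_mul_dickman (hρ_init 1 zero_le_one le_rfl) hρ_cont hρ_dde
      hρ_le hs]
  ring

theorem hasDerivAt_integral_exp_neg_mul_dickman (hρ_cont : ContinuousOn ρ (Ici 0))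
    (hρ_le : ∀ ξ, 0 ≤ ξ → ‖ρ ξ‖ ≤ C) (hs : 0 < s) :
    HasDerivAt (fun s ↦ ∫ ξ in Ioi 1, exp (-s * ξ) * (ρ (ξ - 1) / ξ))
      (-(exp (-s) * ∫ ξ in Ioi 0, exp (-s * ξ) * ρ ξ)) s := by
  have hshift : ∫ ξ in Ioi 1, exp (-s * ξ) * ρ (ξ - 1)
      = exp (-s) * ∫ ξ in Ioi 0, exp (-s * ξ) * ρ ξ := by
    rw [← integral_const_mul, ← zero_add (1 : ℝ),
      ← setIntegral_Ioi_comp_sub_right (fun ξ ↦ exp (-s) * (exp (-s * ξ) * ρ ξ)) 0 1]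
    refine setIntegral_congr_fun measurableSet_Ioi fun ξ _ ↦ ?_
    rw [← mul_assoc, ← exp_add]
    ring_nf
  rw [← hshift]
  exact hasDerivAt_integral_exp_neg_mul_mul_div one_pos hs
    (hρ_cont.comp_sub_one_Ioi.aestronglyMeasurable measurableSet_Ioi)
    fun ξ hξ ↦ hρ_le _ (sub_nonneg.2 (le_of_lt hξ))

end Dickman

theorem laplace_dickman_general
    (ρ : ℝ → ℝ)
    (hρ_init : ∀ x : ℝ, 0 ≤ x → x ≤ 1 → ρ x = 1)
    (hρ_cont : ContinuousOn ρ (Set.Ici 0))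
    (hρ_dde : ∀ x : ℝ, 1 < x → HasDerivAt ρ (-(ρ (x - 1)) / x) x)
    (hρ_bdd : ∀ ξ : ℝ, 0 ≤ ξ → 0 ≤ ρ ξ ∧ ρ ξ ≤ 1)
    (η : ℝ) (hη : 0 < η) :
    ∫ ξ in Set.Ioi (0 : ℝ), Real.exp (-η * ξ) * ρ ξ = Real.exp (-expInt η) / η := by
  have hρ_le : ∀ ξ, 0 ≤ ξ → ‖ρ ξ‖ ≤ 1 := fun ξ hξ ↦
    abs_le.2 ⟨by linarith [(hρ_bdd ξ hξ).1], (hρ_bdd ξ hξ).2⟩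
  set J : ℝ → ℝ := fun s ↦ ∫ ξ in Ioi 1, exp (-s * ξ) * (ρ (ξ - 1) / ξ)
  have hLJ (s : ℝ) (hs : 0 < s) : s * ∫ ξ in Ioi 0, exp (-s * ξ) * ρ ξ = 1 - J s :=
    mul_integral_Ioi_zero_exp_neg_mul_dickman hρ_init hρ_cont hρ_dde hρ_le hs
  have hG : ∀ s ∈ Ioi (0 : ℝ), HasDerivAt (fun s ↦ 1 - J s) (exp (-s) / s * (1 - J s)) s :=
    fun s (hs : 0 < s) ↦
      ((hasDerivAt_integral_exp_neg_mul_dickman hρ_cont hρ_le hs).const_sub 1).congr_deriv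
        (by rw [← hLJ s hs]; field_simp)
  have hlim : Tendsto (fun s ↦ 1 - J s) atTop (𝓝 1) := by
    simpa only [sub_zero] using (tendsto_integral_exp_neg_mul_mul_atTop zero_le_one
      fun ξ hξ ↦ norm_comp_sub_one_div_le hρ_le hξ).const_sub 1
  rw [eq_div_iff hη.ne', mul_comm, hLJ η hη]
  exact eq_exp_neg_expInt_of_hasDerivAt hG hlim hη

/-- The one-sided Laplace transform of Dickman's function is
exp(−E(η))/η for η > 0. -/
theorem laplace_dickman
    (ρ : ℝ → ℝ)
    (hρ_neg : ∀ x < (0 : ℝ), ρ x = 0)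
    (hρ_init : ∀ x : ℝ, 0 ≤ x → x ≤ 1 → ρ x = 1)
    (hρ_cont : ContinuousOn ρ (Set.Ici 0))
    (hρ_dde : ∀ x : ℝ, 1 < x → HasDerivAt ρ (-(ρ (x - 1)) / x) x)
    (hρ_bdd : ∀ ξ : ℝ, 0 ≤ ξ → 0 ≤ ρ ξ ∧ ρ ξ ≤ 1)
    (η : ℝ) (hη : 0 < η) :
    ∫ ξ in Set.Ioi (0 : ℝ), Real.exp (-η * ξ) * ρ ξ = Real.exp (-expInt η) / η :=
  laplace_dickman_general ρ hρ_init hρ_cont hρ_dde hρ_bdd η hη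
end

section
/- For every real η > 0, ∫₁^∞ e^{−ηξ}·(2/√(π·ξ))·arctanh(√(1 − 1/ξ)) dξ = E(η)/√η, where E(η) = ∫_η^∞ e^{−t}/t dt is the exponential integral. (That is, the inverse Laplace transform of E(η)/√η equals (2/√(πξ))·arctanh(√(1 − 1/ξ)) for ξ ≥ 1 and 0 for 0 ≤ ξ < 1.) -/
/-!
Both factors of `E(η) · √(π/η)` are Laplace transforms: `E(η) = ∫₁^∞ e^{-ηs}/s ds` and
`√(π/η) = ∫₀^∞ e^{-ηu}/√u du`. Their product is therefore the integral of the convolution of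
`e^{-ηs} 1_{s>1}/s` with `e^{-ηu} 1_{u>0}/√u`, which at `ξ` equals
`e^{-ηξ} ∫₁^ξ ds / (s √(ξ - s))`, and `s ↦ -(2/√ξ) arctanh √(1 - s/ξ)` is an antiderivative of
the last integrand.
-/

open Real MeasureTheory

/-- The inverse hyperbolic tangent: arctanh(w) = (1/2)·log((1+w)/(1−w)). -/
noncomputable def arctanh (w : ℝ) : ℝ := (1 / 2) * Real.log ((1 + w) / (1 - w))

open Set
open scoped Convolution

theorem hasDerivAt_arctanh {w : ℝ} (h₁ : -1 < w) (h₂ : w < 1) :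
    HasDerivAt arctanh (1 - w ^ 2)⁻¹ w := by
  have hsub : 1 - w ≠ 0 := by linarith
  have hadd : 1 + w ≠ 0 := by linarith
  have hquot := ((hasDerivAt_id w).const_add 1).div ((hasDerivAt_id w).const_sub 1) hsub
  refine ((hquot.log (div_ne_zero hadd hsub)).const_mul (1 / 2)).congr_deriv ?_
  rw [show 1 - w ^ 2 = (1 - w) * (1 + w) by ring]
  simp only [id, Pi.div_apply]
  field_simp
  ring

theorem arctanh_zero : arctanh 0 = 0 := by simp [arctanh]

theorem integral_Ioo_one_div_mul_sqrt_sub {a ξ : ℝ} (ha : 0 < a) (haξ : a < ξ) :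
    ∫ s in Ioo a ξ, 1 / (s * √(ξ - s)) = 2 / √ξ * arctanh √(1 - a / ξ) := by
  have hξ : 0 < ξ := ha.trans haξ
  set F : ℝ → ℝ := fun s => -(2 / √ξ) * arctanh √(1 - s / ξ)
  have hsqrt_lt_one : ∀ s ∈ Icc a ξ, √(1 - s / ξ) < 1 := fun s hs => by
    rw [sqrt_lt' one_pos, one_pow, sub_lt_self_iff]
    exact div_pos (ha.trans_le hs.1) hξ
  have hcont : ContinuousOn F (Icc a ξ) := fun s hs => by
    have h := (hasDerivAt_arctanh (by linarith [sqrt_nonneg (1 - s / ξ)])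
      (hsqrt_lt_one s hs)).continuousAt
    exact ((h.comp (x := s) (f := fun s => √(1 - s / ξ)) (by fun_prop)).const_mul _).continuousWithinAt
  have hderiv : ∀ s ∈ Ioo a ξ, HasDerivAt F (1 / (s * √(ξ - s))) s := by
    rintro s ⟨has, hsξ⟩
    have hs : 0 < s := ha.trans has
    have hd : 0 < 1 - s / ξ := by rw [sub_pos, div_lt_one hξ]; exact hsξ
    have hw := (hasDerivAt_sqrt hd.ne').comp s (((hasDerivAt_id s).div_const ξ).const_sub 1)
    refine (((hasDerivAt_arctanh (by linarith [sqrt_nonneg (1 - s / ξ)])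
      (hsqrt_lt_one s ⟨has.le, hsξ.le⟩)).comp s hw).const_mul (-(2 / √ξ))).congr_deriv ?_
    have hsplit : √(ξ - s) = √ξ * √(1 - s / ξ) := by
      rw [← sqrt_mul hξ.le]; congr 1; field_simp
    rw [hsplit, sq_sqrt hd.le]
    field_simp [hs.ne']
    ring
  have hnonneg : ∀ s ∈ Ioo a ξ, 0 ≤ 1 / (s * √(ξ - s)) := fun s hs => by
    have : 0 < s := ha.trans hs.1
    positivity
  have hint := intervalIntegral.integrableOn_deriv_of_nonneg hcont hderiv hnonneg
  have hFTC := intervalIntegral.integral_eq_sub_of_hasDerivAt_of_le haξ.le hcont hderiv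
    ((intervalIntegrable_iff_integrableOn_Ioc_of_le haξ.le).mpr hint)
  rw [intervalIntegral.integral_of_le haξ.le, integral_Ioc_eq_integral_Ioo] at hFTC
  rw [hFTC]
  simp [F, div_self hξ.ne', arctanh_zero]

section Laplace

variable {η : ℝ}

theorem integrableOn_exp_neg_mul_div {a : ℝ} (ha : 0 < a) (hη : 0 < η) :
    IntegrableOn (fun s => exp (-(η * s)) / s) (Ioi a) := by
  refine ((exp_neg_integrableOn_Ioi a hη).const_mul a⁻¹).mono'
    (by fun_prop : Measurable fun s => exp (-(η * s)) / s).aestronglyMeasurable ?_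
  filter_upwards [ae_restrict_mem measurableSet_Ioi] with s (hs : a < s)
  rw [norm_div, Real.norm_of_nonneg (exp_pos _).le, Real.norm_of_nonneg (ha.trans hs).le, neg_mul,
    div_eq_inv_mul]
  gcongr

theorem integral_exp_neg_mul_div (a : ℝ) (hη : 0 < η) :
    ∫ s in Ioi a, exp (-(η * s)) / s = expInt (η * a) := by
  calc ∫ s in Ioi a, exp (-(η * s)) / s = ∫ s in Ioi a, η * (exp (-(η * s)) / (η * s)) :=
        setIntegral_congr_fun measurableSet_Ioi fun s _ => by field_simp
    _ = expInt (η * a) := by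
      rw [integral_const_mul, integral_comp_mul_left_Ioi (fun t => exp (-t) / t) a hη, smul_eq_mul,
        mul_inv_cancel_left₀ hη.ne', expInt]

theorem integral_exp_neg_mul_div_sqrt (hη : 0 < η) :
    ∫ u in Ioi (0 : ℝ), exp (-(η * u)) / √u = √π / √η := by
  have h := integral_rpow_mul_exp_neg_mul_Ioi one_half_pos hη
  rw [Gamma_one_half_eq, ← sqrt_eq_rpow, sqrt_div' _ hη.le, sqrt_one] at h
  refine (setIntegral_congr_fun measurableSet_Ioi fun u (hu : 0 < u) => ?_).trans (h.trans (by ring))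
  rw [show (1 / 2 : ℝ) - 1 = -(1 / 2) by norm_num, rpow_neg hu.le, ← sqrt_eq_rpow]
  ring

theorem integrableOn_exp_neg_mul_div_sqrt (hη : 0 < η) :
    IntegrableOn (fun u => exp (-(η * u)) / √u) (Ioi 0) := by
  refine (integrableOn_rpow_mul_exp_neg_mul_rpow (s := -(1 / 2)) (by norm_num) one_pos hη).congr_fun
    (fun u (hu : 0 < u) => ?_) measurableSet_Ioi
  show u ^ (-(1 / 2 : ℝ)) * exp (-η * u ^ (1 : ℝ)) = _
  rw [rpow_neg hu.le, ← sqrt_eq_rpow, rpow_one, neg_mul]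
  ring

end Laplace

open ContinuousLinearMap in
theorem convolution_indicator_exp_neg_mul_div {a : ℝ} (η ξ : ℝ) :
    ((Ioi a).indicator (fun s => exp (-(η * s)) / s) ⋆[mul ℝ ℝ]
        (Ioi 0).indicator (fun u => exp (-(η * u)) / √u)) ξ =
      exp (-(η * ξ)) * ∫ s in Ioo a ξ, 1 / (s * √(ξ - s)) := by
  rw [convolution_mul, ← integral_const_mul, ← integral_indicator measurableSet_Ioo]
  congr 1 with s
  by_cases hs : s ∈ Ioo a ξ
  · have hξs : ξ - s ∈ Ioi 0 := sub_pos.mpr hs.2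
    rw [indicator_of_mem (mem_Ioi.mpr hs.1), indicator_of_mem hξs, indicator_of_mem hs,
      mul_sub, neg_sub, sub_eq_add_neg, exp_add, exp_neg]
    field_simp
  · rw [indicator_of_notMem hs]
    rcases not_and_or.mp hs with has | hsξ
    · rw [indicator_of_notMem (show s ∉ Ioi a from has), zero_mul]
    · rw [indicator_of_notMem (show ξ - s ∉ Ioi 0 by simpa using hsξ), mul_zero]

/-- For η > 0,
∫₁^∞ e^{−ηξ}·(2/√(πξ))·arctanh(√(1 − 1/ξ)) dξ = E(η)/√η. -/
theorem laplace_arctanh (η : ℝ) (hη : 0 < η) :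
    ∫ ξ in Set.Ioi (1 : ℝ),
        Real.exp (-η * ξ) * (2 / Real.sqrt (π * ξ)) * arctanh (Real.sqrt (1 - 1 / ξ)) =
      expInt η / Real.sqrt η := by
  set f := (Ioi (1 : ℝ)).indicator fun s => exp (-(η * s)) / s
  set g := (Ioi (0 : ℝ)).indicator fun u => exp (-(η * u)) / √u
  have hconv := convolution_indicator_exp_neg_mul_div (a := 1) η
  calc _ = ∫ ξ in Ioi 1, (√π)⁻¹ * (f ⋆[ContinuousLinearMap.mul ℝ ℝ] g) ξ :=
        setIntegral_congr_fun measurableSet_Ioi fun ξ (hξ : 1 < ξ) => by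
          rw [hconv, integral_Ioo_one_div_mul_sqrt_sub one_pos hξ, sqrt_mul pi_pos.le]
          field_simp
    _ = (√π)⁻¹ * ∫ ξ, (f ⋆[ContinuousLinearMap.mul ℝ ℝ] g) ξ := by
        rw [integral_const_mul, setIntegral_eq_integral_of_forall_compl_eq_zero fun ξ hξ => ?_]
        rw [hconv, Ioo_eq_empty (by simpa using hξ)]
        simp
    _ = (√π)⁻¹ * (expInt η * (√π / √η)) := by
        rw [integral_convolution _
          ((integrable_indicator_iff measurableSet_Ioi).mpr (integrableOn_exp_neg_mul_div one_pos hη))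
          ((integrable_indicator_iff measurableSet_Ioi).mpr (integrableOn_exp_neg_mul_div_sqrt hη)),
          integral_indicator measurableSet_Ioi, integral_indicator measurableSet_Ioi,
          integral_exp_neg_mul_div 1 hη, mul_one, integral_exp_neg_mul_div_sqrt hη,
          ContinuousLinearMap.mul_apply']
    _ = expInt η / √η := by
        field_simp
end
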